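/- arXiv:2410.16234 — 3 statements merged into one kernel-verified Lean document; each statement's English description precedes it below -/
import Mathlib

section
/- Let (r, Ω², φ, e) be a smooth solution of the spherically symmetric Einstein–Maxwell–scalar field system on an open set U ⊆ ℝ² with ν := ∂_u r nowhere zero, and let h : (0,∞) → ℝ be a C² function. Then the null Lagrangian identity ∂_u∂_v(h(r) r φ²) − ∂_u(r h'(r) λ φ²) − ∂_v(r h'(r) ν φ²) + (r λ ν h''(r) + 2 r κ ν 𝜘 h'(r) − 2 κ 𝜘 ν h(r)) φ² − 2 h(r) r (∂_u φ)(∂_v φ) = 0 holds on U, where λ := ∂_v r, κ := −Ω²/(4ν), and 𝜘 := r⁻²(ϖ − e²/r). -/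
noncomputable section

/-- Partial derivative in the ingoing null direction `u` (the first coordinate of `ℝ²`). -/
def pu (f : ℝ × ℝ → ℝ) (p : ℝ × ℝ) : ℝ := fderiv ℝ f p (1, 0)

/-- Partial derivative in the outgoing null direction `v` (the second coordinate of `ℝ²`). -/
def pv (f : ℝ × ℝ → ℝ) (p : ℝ × ℝ) : ℝ := fderiv ℝ f p (0, 1)

/-- The Hawking mass `m = (r/2)(1 + 4νλ/Ω²)`, where `ν = ∂_u r` and `λ = ∂_v r`. -/
def hawkingMass (r Ω2 : ℝ × ℝ → ℝ) (p : ℝ × ℝ) : ℝ :=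
  r p / 2 * (1 + 4 * pu r p * pv r p / Ω2 p)

/-- The renormalized Hawking mass `ϖ = m + e²/(2r)`. -/
def varpi (r Ω2 : ℝ × ℝ → ℝ) (e : ℝ) (p : ℝ × ℝ) : ℝ :=
  hawkingMass r Ω2 p + e ^ 2 / (2 * r p)

/-- The mass aspect function `μ = 2m/r`. -/
def muQ (r Ω2 : ℝ × ℝ → ℝ) (p : ℝ × ℝ) : ℝ := 2 * hawkingMass r Ω2 p / r p

/-- `κ = -Ω²/(4ν)`. -/
def kap (r Ω2 : ℝ × ℝ → ℝ) (p : ℝ × ℝ) : ℝ := -Ω2 p / (4 * pu r p)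

/-- `γ = -Ω²/(4λ)`. -/
def gam (r Ω2 : ℝ × ℝ → ℝ) (p : ℝ × ℝ) : ℝ := -Ω2 p / (4 * pv r p)

/-- The redshift factor `𝜘 = r⁻²(ϖ - e²/r)`. -/
def redshift (r Ω2 : ℝ × ℝ → ℝ) (e : ℝ) (p : ℝ × ℝ) : ℝ :=
  (varpi r Ω2 e p - e ^ 2 / r p) / r p ^ 2

/-- A smooth solution of the spherically symmetric Einstein–Maxwell–scalar field
system on an open set `U ⊆ ℝ²`, with null coordinates `(u, v)`. -/
structure IsEMSSolution (U : Set (ℝ × ℝ)) (r Ω2 φ : ℝ × ℝ → ℝ) (e : ℝ) : Prop where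
  open_U : IsOpen U
  smooth_r : ContDiffOn ℝ (⊤ : ℕ∞) r U
  smooth_Ω2 : ContDiffOn ℝ (⊤ : ℕ∞) Ω2 U
  smooth_φ : ContDiffOn ℝ (⊤ : ℕ∞) φ U
  r_pos : ∀ p ∈ U, 0 < r p
  Ω2_pos : ∀ p ∈ U, 0 < Ω2 p
  wave_r : ∀ p ∈ U,
    pu (pv r) p
      = -Ω2 p / (4 * r p) - pu r p * pv r p / r p + Ω2 p * e ^ 2 / (4 * r p ^ 3)
  wave_Ω2 : ∀ p ∈ U,
    pu (pv (fun q => Real.log (Ω2 q))) p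
      = Ω2 p / (2 * r p ^ 2) + 2 * pu r p * pv r p / r p ^ 2
        - Ω2 p * e ^ 2 / r p ^ 4 - 2 * pu φ p * pv φ p
  raychaudhuri_u : ∀ p ∈ U,
    pu (fun q => pu r q / Ω2 q) p = -(r p / Ω2 p) * pu φ p ^ 2
  raychaudhuri_v : ∀ p ∈ U,
    pv (fun q => pv r q / Ω2 q) p = -(r p / Ω2 p) * pv φ p ^ 2
  wave_φ : ∀ p ∈ U,
    pu (pv φ) p = -(pv r p * pu φ p + pu r p * pv φ p) / r p

section Helpers

variable {f g f1 f2 f3 f4 : ℝ × ℝ → ℝ} {p : ℝ × ℝ} {c : ℝ}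

lemma pu_mul (hf : DifferentiableAt ℝ f p) (hg : DifferentiableAt ℝ g p) :
    pu (fun q => f q * g q) p = pu f p * g p + f p * pu g p := by
  simp only [pu, fderiv_fun_mul hf hg, ContinuousLinearMap.add_apply,
    ContinuousLinearMap.smul_apply, smul_eq_mul]
  ring

lemma pv_mul (hf : DifferentiableAt ℝ f p) (hg : DifferentiableAt ℝ g p) :
    pv (fun q => f q * g q) p = pv f p * g p + f p * pv g p := by
  simp only [pv, fderiv_fun_mul hf hg, ContinuousLinearMap.add_apply,
    ContinuousLinearMap.smul_apply, smul_eq_mul]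
  ring

lemma pu_add (hf : DifferentiableAt ℝ f p) (hg : DifferentiableAt ℝ g p) :
    pu (fun q => f q + g q) p = pu f p + pu g p := by
  simp [pu, fderiv_fun_add hf hg]

lemma pu_const_mul (hf : DifferentiableAt ℝ f p) :
    pu (fun q => c * f q) p = c * pu f p := by
  simp [pu, fderiv_const_mul hf]

lemma pu_comp {h : ℝ → ℝ} (hh : DifferentiableAt ℝ h (f p)) (hf : DifferentiableAt ℝ f p) :
    pu (fun q => h (f q)) p = deriv h (f p) * pu f p := by
  have hc : fderiv ℝ (h ∘ f) p = (fderiv ℝ h (f p)).comp (fderiv ℝ f p) := fderiv_comp p hh hf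
  have h2 : pu (fun q => h (f q)) p = (fderiv ℝ h (f p)) (pu f p) := by
    simp only [pu]
    rw [show (fun q => h (f q)) = h ∘ f from rfl, hc]
    rfl
  rw [h2, fderiv_eq_smul_deriv, smul_eq_mul, mul_comm]

lemma pv_comp {h : ℝ → ℝ} (hh : DifferentiableAt ℝ h (f p)) (hf : DifferentiableAt ℝ f p) :
    pv (fun q => h (f q)) p = deriv h (f p) * pv f p := by
  have hc : fderiv ℝ (h ∘ f) p = (fderiv ℝ h (f p)).comp (fderiv ℝ f p) := fderiv_comp p hh hf
  have h2 : pv (fun q => h (f q)) p = (fderiv ℝ h (f p)) (pv f p) := by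
    simp only [pv]
    rw [show (fun q => h (f q)) = h ∘ f from rfl, hc]
    rfl
  rw [h2, fderiv_eq_smul_deriv, smul_eq_mul, mul_comm]

lemma pu_sq (hf : DifferentiableAt ℝ f p) :
    pu (fun q => f q ^ 2) p = 2 * f p * pu f p := by
  have h2 : (fun q => f q ^ 2) = fun q => f q * f q := by funext q; ring
  rw [h2, pu_mul hf hf]; ring

lemma pv_sq (hf : DifferentiableAt ℝ f p) :
    pv (fun q => f q ^ 2) p = 2 * f p * pv f p := by
  have h2 : (fun q => f q ^ 2) = fun q => f q * f q := by funext q; ring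
  rw [h2, pv_mul hf hf]; ring

lemma pu_mul3 (h1 : DifferentiableAt ℝ f1 p) (h2 : DifferentiableAt ℝ f2 p)
    (h3 : DifferentiableAt ℝ f3 p) :
    pu (fun q => f1 q * f2 q * f3 q) p
      = pu f1 p * f2 p * f3 p + f1 p * pu f2 p * f3 p + f1 p * f2 p * pu f3 p := by
  rw [pu_mul (h1.fun_mul h2) h3, pu_mul h1 h2]; ring

lemma pv_mul3 (h1 : DifferentiableAt ℝ f1 p) (h2 : DifferentiableAt ℝ f2 p)
    (h3 : DifferentiableAt ℝ f3 p) :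
    pv (fun q => f1 q * f2 q * f3 q) p
      = pv f1 p * f2 p * f3 p + f1 p * pv f2 p * f3 p + f1 p * f2 p * pv f3 p := by
  rw [pv_mul (h1.fun_mul h2) h3, pv_mul h1 h2]; ring

lemma pu_mul4 (h1 : DifferentiableAt ℝ f1 p) (h2 : DifferentiableAt ℝ f2 p)
    (h3 : DifferentiableAt ℝ f3 p) (h4 : DifferentiableAt ℝ f4 p) :
    pu (fun q => f1 q * f2 q * f3 q * f4 q) p
      = pu f1 p * f2 p * f3 p * f4 p + f1 p * pu f2 p * f3 p * f4 p
        + f1 p * f2 p * pu f3 p * f4 p + f1 p * f2 p * f3 p * pu f4 p := by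
  rw [pu_mul ((h1.fun_mul h2).fun_mul h3) h4, pu_mul3 h1 h2 h3]; ring

lemma pv_mul4 (h1 : DifferentiableAt ℝ f1 p) (h2 : DifferentiableAt ℝ f2 p)
    (h3 : DifferentiableAt ℝ f3 p) (h4 : DifferentiableAt ℝ f4 p) :
    pv (fun q => f1 q * f2 q * f3 q * f4 q) p
      = pv f1 p * f2 p * f3 p * f4 p + f1 p * pv f2 p * f3 p * f4 p
        + f1 p * f2 p * pv f3 p * f4 p + f1 p * f2 p * f3 p * pv f4 p := by
  rw [pv_mul ((h1.fun_mul h2).fun_mul h3) h4, pv_mul3 h1 h2 h3]; ring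

lemma diffAt_pd {U : Set (ℝ × ℝ)} (hU : IsOpen U) (hf : ContDiffOn ℝ (⊤ : ℕ∞) f U)
    {q : ℝ × ℝ} (hq : q ∈ U) (w : ℝ × ℝ) :
    DifferentiableAt ℝ (fun x => fderiv ℝ f x w) q := by
  have h1 : ContDiffOn ℝ 1 (fderiv ℝ f) U := hf.fderiv_of_isOpen hU (WithTop.coe_le_coe.mpr le_top)
  have h2 : ContDiffOn ℝ 1 (fun x => fderiv ℝ f x w) U := h1.clm_apply contDiffOn_const
  exact (h2.differentiableOn one_ne_zero).differentiableAt (hU.mem_nhds hq)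

lemma pv_pu_comm (hf : ContDiffAt ℝ 2 f p) : pv (pu f) p = pu (pv f) p := by
  have hsymm : IsSymmSndFDerivAt ℝ f p := hf.isSymmSndFDerivAt (by simp)
  have hd : DifferentiableAt ℝ (fderiv ℝ f) p :=
    (hf.fderiv_right (m := 1) le_rfl).differentiableAt one_ne_zero
  have h1 : pv (pu f) p = fderiv ℝ (fderiv ℝ f) p (0, 1) (1, 0) := by
    show fderiv ℝ (fun q => (fderiv ℝ f q) (1, 0)) p (0, 1) = _
    rw [fderiv_clm_apply hd (differentiableAt_const _)]
    simp
  have h2 : pu (pv f) p = fderiv ℝ (fderiv ℝ f) p (1, 0) (0, 1) := by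
    show fderiv ℝ (fun q => (fderiv ℝ f q) (0, 1)) p (1, 0) = _
    rw [fderiv_clm_apply hd (differentiableAt_const _)]
    simp
  rw [h1, h2, hsymm.eq]

end Helpers

/-- For a smooth solution of the spherically symmetric
Einstein–Maxwell–scalar field system on an open set `U ⊆ ℝ²` with `ν = ∂_u r`
nowhere zero, and any `C²` function `h : (0,∞) → ℝ`, the null Lagrangian
identity
`∂_u∂_v(h r φ²) - ∂_u(r h' λ φ²) - ∂_v(r h' ν φ²)
  + (rλν h'' + 2rκν𝜘 h' - 2κ𝜘ν h) φ² - 2 h r (∂_u φ)(∂_v φ) = 0`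
holds on `U`, where `h, h', h''` are evaluated at `r`. -/
theorem null_lagrangian_identity
    (U : Set (ℝ × ℝ)) (r Ω2 φ : ℝ × ℝ → ℝ) (e : ℝ)
    (hsol : IsEMSSolution U r Ω2 φ e)
    (hν : ∀ p ∈ U, pu r p ≠ 0)
    (h : ℝ → ℝ) (hh : ContDiffOn ℝ 2 h (Set.Ioi (0 : ℝ))) :
    ∀ p ∈ U,
      pu (pv (fun q => h (r q) * r q * φ q ^ 2)) p
        - pu (fun q => r q * deriv h (r q) * pv r q * φ q ^ 2) p
        - pv (fun q => r q * deriv h (r q) * pu r q * φ q ^ 2) p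
        + (r p * pv r p * pu r p * deriv (deriv h) (r p)
            + 2 * r p * kap r Ω2 p * pu r p * redshift r Ω2 e p * deriv h (r p)
            - 2 * kap r Ω2 p * redshift r Ω2 e p * pu r p * h (r p)) * φ p ^ 2
        - 2 * h (r p) * r p * pu φ p * pv φ p = 0 := by
  have oU := hsol.open_U
  have dr : ∀ q ∈ U, DifferentiableAt ℝ r q := fun q hq =>
    (hsol.smooth_r.differentiableOn (by simp)).differentiableAt (oU.mem_nhds hq)
  have dφ : ∀ q ∈ U, DifferentiableAt ℝ φ q := fun q hq =>
    (hsol.smooth_φ.differentiableOn (by simp)).differentiableAt (oU.mem_nhds hq)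
  have dh : ∀ q ∈ U, DifferentiableAt ℝ h (r q) := fun q hq =>
    (hh.differentiableOn two_ne_zero).differentiableAt (isOpen_Ioi.mem_nhds (hsol.r_pos q hq))
  have hh' : ContDiffOn ℝ 1 (deriv h) (Set.Ioi (0:ℝ)) :=
    hh.deriv_of_isOpen isOpen_Ioi (by norm_num)
  have dh' : ∀ q ∈ U, DifferentiableAt ℝ (deriv h) (r q) := fun q hq =>
    (hh'.differentiableOn one_ne_zero).differentiableAt (isOpen_Ioi.mem_nhds (hsol.r_pos q hq))
  have dpur : ∀ q ∈ U, DifferentiableAt ℝ (pu r) q := fun q hq =>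
    diffAt_pd oU hsol.smooth_r hq (1, 0)
  have dpvr : ∀ q ∈ U, DifferentiableAt ℝ (pv r) q := fun q hq =>
    diffAt_pd oU hsol.smooth_r hq (0, 1)
  have dpvφ : ∀ q ∈ U, DifferentiableAt ℝ (pv φ) q := fun q hq =>
    diffAt_pd oU hsol.smooth_φ hq (0, 1)
  have dhr : ∀ q ∈ U, DifferentiableAt ℝ (fun x => h (r x)) q := fun q hq =>
    (dh q hq).comp q (dr q hq)
  have dh'r : ∀ q ∈ U, DifferentiableAt ℝ (fun x => deriv h (r x)) q := fun q hq =>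
    (dh' q hq).comp q (dr q hq)
  have dφ2 : ∀ q ∈ U, DifferentiableAt ℝ (fun x => φ x ^ 2) q := fun q hq =>
    (dφ q hq).pow 2
  intro p hp
  -- Step 1: rewrite the inner  ∂_v  of the first term on U.
  have hGeq : ∀ q ∈ U, pv (fun x => h (r x) * r x * φ x ^ 2) q
      = deriv h (r q) * pv r q * r q * φ q ^ 2 + h (r q) * pv r q * φ q ^ 2
        + 2 * (h (r q) * r q * φ q * pv φ q) := by
    intro q hq
    rw [pv_mul3 (dhr q hq) (dr q hq) (dφ2 q hq), pv_comp (dh q hq) (dr q hq),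
      pv_sq (dφ q hq)]
    ring
  have hA : pu (pv (fun q => h (r q) * r q * φ q ^ 2)) p
      = pu (fun x => deriv h (r x) * pv r x * r x * φ x ^ 2
          + h (r x) * pv r x * φ x ^ 2 + 2 * (h (r x) * r x * φ x * pv φ x)) p := by
    unfold pu
    congr 1
    apply Filter.EventuallyEq.fderiv_eq
    filter_upwards [oU.mem_nhds hp] with q hq using hGeq q hq
  rw [hA]
  rw [pu_add ((((dh'r p hp).fun_mul (dpvr p hp)).fun_mul (dr p hp)).fun_mul (dφ2 p hp) |>.fun_add
        (((dhr p hp).fun_mul (dpvr p hp)).fun_mul (dφ2 p hp)))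
      (((((dhr p hp).fun_mul (dr p hp)).fun_mul (dφ p hp)).fun_mul (dpvφ p hp)).const_mul 2),
    pu_add ((((dh'r p hp).fun_mul (dpvr p hp)).fun_mul (dr p hp)).fun_mul (dφ2 p hp))
      (((dhr p hp).fun_mul (dpvr p hp)).fun_mul (dφ2 p hp)),
    pu_mul4 (dh'r p hp) (dpvr p hp) (dr p hp) (dφ2 p hp),
    pu_mul3 (dhr p hp) (dpvr p hp) (dφ2 p hp),
    pu_const_mul ((((dhr p hp).fun_mul (dr p hp)).fun_mul (dφ p hp)).fun_mul (dpvφ p hp)),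
    pu_mul4 (dhr p hp) (dr p hp) (dφ p hp) (dpvφ p hp),
    pu_mul4 (dr p hp) (dh'r p hp) (dpvr p hp) (dφ2 p hp),
    pv_mul4 (dr p hp) (dh'r p hp) (dpur p hp) (dφ2 p hp),
    pu_comp (dh p hp) (dr p hp), pu_comp (dh' p hp) (dr p hp),
    pv_comp (dh' p hp) (dr p hp),
    pu_sq (dφ p hp), pv_sq (dφ p hp),
    pv_pu_comm (((hsol.smooth_r.contDiffAt (oU.mem_nhds hp)).of_le (by exact WithTop.coe_le_coe.mpr (le_top : (2 : ℕ∞) ≤ ⊤)))),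
    hsol.wave_r p hp, hsol.wave_φ p hp]
  simp only [kap, redshift, varpi, hawkingMass]
  have hR := (hsol.r_pos p hp).ne'
  have hΩ := (hsol.Ω2_pos p hp).ne'
  have hnu : pu r p ≠ 0 := hν p hp
  field_simp
  ring
end
end

section
/- Let (r, Ω², φ, e) be a smooth solution of the spherically symmetric Einstein–Maxwell–scalar field system on an open set U ⊆ ℝ² with ν := ∂_u r nowhere zero, and let f : (0,∞) → ℝ be a C² function. Then, with f, f', f'' evaluated at r, the modified Morawetz identity −r² f' (λ(∂_u φ)² − ν(∂_v φ)²) − 2 r f (λ − ν − 2)(∂_u φ)(∂_v φ) + 2(r f'' λ + 2(r f' − f) κ 𝜘)(−ν) φ² = ∂_u(r² f (∂_v φ)² − 2 r f' λ φ² + ∂_v(r f φ²)) − ∂_v(r² f (∂_u φ)² + 2 r f' ν φ² − ∂_u(r f φ²)) holds on U, where λ := ∂_v r, κ := −Ω²/(4ν), and 𝜘 := r⁻²(ϖ − e²/r). -/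
noncomputable section

section Helpers

lemma hasDerivAt_line (a : ℝ × ℝ → ℝ) {p : ℝ × ℝ} (w : ℝ × ℝ)
    (ha : DifferentiableAt ℝ a p) :
    HasDerivAt (fun t : ℝ => a (p + t • w)) (fderiv ℝ a p w) 0 := by
  have hline : HasDerivAt (fun t : ℝ => p + t • w) w 0 := by
    simpa using ((hasDerivAt_id (0:ℝ)).smul_const w).const_add p
  have hfd : HasFDerivAt a (fderiv ℝ a p) ((fun t : ℝ => p + t • w) 0) := by
    simpa using ha.hasFDerivAt
  exact hfd.comp_hasDerivAt 0 hline

lemma pd_eq {a : ℝ × ℝ → ℝ} {p w : ℝ × ℝ} {c : ℝ}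
    (ha : DifferentiableAt ℝ a p)
    (h : HasDerivAt (fun t : ℝ => a (p + t • w)) c 0) :
    fderiv ℝ a p w = c :=
  (hasDerivAt_line a w ha).unique h

lemma pd_comp {f : ℝ → ℝ} {r : ℝ × ℝ → ℝ} {p : ℝ × ℝ}
    (hf : DifferentiableAt ℝ f (r p)) (hr : DifferentiableAt ℝ r p) (w : ℝ × ℝ) :
    fderiv ℝ (fun q => f (r q)) p w = deriv f (r p) * fderiv ℝ r p w := by
  rw [show (fun q => f (r q)) = f ∘ r from rfl, fderiv_comp p hf hr]
  simp [mul_comm]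

lemma diffAt_pd_s8 {g : ℝ × ℝ → ℝ} {p : ℝ × ℝ} (hg : ContDiffAt ℝ 2 g p) (w : ℝ × ℝ) :
    DifferentiableAt ℝ (fun q => fderiv ℝ g q w) p := by
  have h1 : ContDiffAt ℝ 1 (fderiv ℝ g) p := hg.fderiv_right (by norm_num)
  exact (h1.differentiableAt one_ne_zero).clm_apply (differentiableAt_const w)

lemma pd_pd {g : ℝ × ℝ → ℝ} {p : ℝ × ℝ} (hg : ContDiffAt ℝ 2 g p) (v w : ℝ × ℝ) :
    fderiv ℝ (fun q => fderiv ℝ g q w) p v = fderiv ℝ (fderiv ℝ g) p v w := by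
  have h1 : ContDiffAt ℝ 1 (fderiv ℝ g) p := hg.fderiv_right (by norm_num)
  rw [fderiv_clm_apply (h1.differentiableAt one_ne_zero) (differentiableAt_const w)]
  simp

lemma pd_symm {g : ℝ × ℝ → ℝ} {p : ℝ × ℝ} (hg : ContDiffAt ℝ 2 g p) :
    pv (pu g) p = pu (pv g) p := by
  show fderiv ℝ (fun q => fderiv ℝ g q (1,0)) p (0,1)
    = fderiv ℝ (fun q => fderiv ℝ g q (0,1)) p (1,0)
  rw [pd_pd hg, pd_pd hg]
  exact (hg.isSymmSndFDerivAt (by simp [minSmoothness_of_isRCLikeNormedField])) _ _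

end Helpers


set_option maxHeartbeats 2000000 in
/-- For a smooth solution of the spherically symmetric
Einstein–Maxwell–scalar field system on an open set `U ⊆ ℝ²` with `ν = ∂_u r`
nowhere zero, and any `C²` function `f : (0,∞) → ℝ`, the modified Morawetz
identity
`-r²f'(λ(∂_u φ)² - ν(∂_v φ)²) - 2rf(λ-ν-2)(∂_u φ)(∂_v φ)
   + 2(rf''λ + 2(rf'-f)κ𝜘)(-ν)φ²
 = ∂_u(r²f(∂_v φ)² - 2rf'λφ² + ∂_v(rfφ²)) - ∂_v(r²f(∂_u φ)² + 2rf'νφ² - ∂_u(rfφ²))`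
holds on `U`, with `f, f', f''` evaluated at `r`. -/
theorem modified_morawetz_identity
    (U : Set (ℝ × ℝ)) (r Ω2 φ : ℝ × ℝ → ℝ) (e : ℝ)
    (hsol : IsEMSSolution U r Ω2 φ e)
    (hν : ∀ p ∈ U, pu r p ≠ 0)
    (f : ℝ → ℝ) (hf : ContDiffOn ℝ 2 f (Set.Ioi (0 : ℝ))) :
    ∀ p ∈ U,
      -(r p ^ 2 * deriv f (r p))
          * (pv r p * pu φ p ^ 2 - pu r p * pv φ p ^ 2)
        - 2 * r p * f (r p) * (pv r p - pu r p - 2) * pu φ p * pv φ p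
        + 2 * (r p * deriv (deriv f) (r p) * pv r p
            + 2 * (r p * deriv f (r p) - f (r p)) * kap r Ω2 p
                * redshift r Ω2 e p)
          * (-pu r p) * φ p ^ 2
      = pu (fun q => r q ^ 2 * f (r q) * pv φ q ^ 2
            - 2 * r q * deriv f (r q) * pv r q * φ q ^ 2
            + pv (fun q' => r q' * f (r q') * φ q' ^ 2) q) p
        - pv (fun q => r q ^ 2 * f (r q) * pu φ q ^ 2
            + 2 * r q * deriv f (r q) * pu r q * φ q ^ 2
            - pu (fun q' => r q' * f (r q') * φ q' ^ 2) q) p := by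
  have hU := hsol.open_U
  -- basic differentiability facts
  have hrC : ∀ q ∈ U, ContDiffAt ℝ 2 r q := fun q hq =>
    (hsol.smooth_r.contDiffAt (hU.mem_nhds hq)).of_le (WithTop.coe_le_coe.mpr le_top)
  have hφC : ∀ q ∈ U, ContDiffAt ℝ 2 φ q := fun q hq =>
    (hsol.smooth_φ.contDiffAt (hU.mem_nhds hq)).of_le (WithTop.coe_le_coe.mpr le_top)
  have hfd : ∀ x : ℝ, 0 < x → DifferentiableAt ℝ f x := fun x hx =>
    (hf.contDiffAt (isOpen_Ioi.mem_nhds hx)).differentiableAt (by norm_num)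
  have hf'C : ContDiffOn ℝ 1 (deriv f) (Set.Ioi 0) :=
    hf.deriv_of_isOpen isOpen_Ioi (by norm_num)
  have hf'd : ∀ x : ℝ, 0 < x → DifferentiableAt ℝ (deriv f) x := fun x hx =>
    (hf'C.contDiffAt (isOpen_Ioi.mem_nhds hx)).differentiableAt one_ne_zero
  have hdr : ∀ q ∈ U, DifferentiableAt ℝ r q := fun q hq =>
    (hrC q hq).differentiableAt (by norm_num)
  have hdφ : ∀ q ∈ U, DifferentiableAt ℝ φ q := fun q hq =>
    (hφC q hq).differentiableAt (by norm_num)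
  have hdF : ∀ q ∈ U, DifferentiableAt ℝ (fun q' => f (r q')) q := fun q hq =>
    (hfd _ (hsol.r_pos q hq)).comp q (hdr q hq)
  have hdF1 : ∀ q ∈ U, DifferentiableAt ℝ (fun q' => deriv f (r q')) q := fun q hq =>
    (hf'd _ (hsol.r_pos q hq)).comp q (hdr q hq)
  have hdL : ∀ q ∈ U, DifferentiableAt ℝ (pv r) q := fun q hq =>
    diffAt_pd_s8 (hrC q hq) (0, 1)
  have hdN : ∀ q ∈ U, DifferentiableAt ℝ (pu r) q := fun q hq =>
    diffAt_pd_s8 (hrC q hq) (1, 0)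
  have hdPv : ∀ q ∈ U, DifferentiableAt ℝ (pv φ) q := fun q hq =>
    diffAt_pd_s8 (hφC q hq) (0, 1)
  have hdPu : ∀ q ∈ U, DifferentiableAt ℝ (pu φ) q := fun q hq =>
    diffAt_pd_s8 (hφC q hq) (1, 0)
  -- formula for the first derivatives of G = r f(r) φ²
  have hGv : ∀ q ∈ U, pv (fun q' => r q' * f (r q') * φ q' ^ 2) q
      = pv r q * f (r q) * φ q ^ 2 + r q * deriv f (r q) * pv r q * φ q ^ 2
        + 2 * r q * f (r q) * φ q * pv φ q := by
    intro q hq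
    have hR := hasDerivAt_line r ((0:ℝ), (1:ℝ)) (hdr q hq)
    have hF := hasDerivAt_line (fun q' => f (r q')) ((0:ℝ), (1:ℝ)) (hdF q hq)
    have hΦ := hasDerivAt_line φ ((0:ℝ), (1:ℝ)) (hdφ q hq)
    have hd : DifferentiableAt ℝ (fun q' => r q' * f (r q') * φ q' ^ 2) q :=
      ((hdr q hq).mul (hdF q hq)).mul ((hdφ q hq).pow 2)
    have h2 := pd_eq (w := ((0:ℝ), (1:ℝ))) hd (by exact (hR.mul hF).mul (hΦ.pow 2))
    simp only [zero_smul, add_zero, Pi.mul_apply, Pi.pow_apply] at h2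
    rw [pd_comp (hfd _ (hsol.r_pos q hq)) (hdr q hq)] at h2
    show fderiv ℝ _ q ((0:ℝ), (1:ℝ)) = _
    rw [h2]
    simp only [pu, pv]
    ring
  have hGu : ∀ q ∈ U, pu (fun q' => r q' * f (r q') * φ q' ^ 2) q
      = pu r q * f (r q) * φ q ^ 2 + r q * deriv f (r q) * pu r q * φ q ^ 2
        + 2 * r q * f (r q) * φ q * pu φ q := by
    intro q hq
    have hR := hasDerivAt_line r ((1:ℝ), (0:ℝ)) (hdr q hq)
    have hF := hasDerivAt_line (fun q' => f (r q')) ((1:ℝ), (0:ℝ)) (hdF q hq)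
    have hΦ := hasDerivAt_line φ ((1:ℝ), (0:ℝ)) (hdφ q hq)
    have hd : DifferentiableAt ℝ (fun q' => r q' * f (r q') * φ q' ^ 2) q :=
      ((hdr q hq).mul (hdF q hq)).mul ((hdφ q hq).pow 2)
    have h2 := pd_eq (w := ((1:ℝ), (0:ℝ))) hd (by exact (hR.mul hF).mul (hΦ.pow 2))
    simp only [zero_smul, add_zero, Pi.mul_apply, Pi.pow_apply] at h2
    rw [pd_comp (hfd _ (hsol.r_pos q hq)) (hdr q hq)] at h2
    show fderiv ℝ _ q ((1:ℝ), (0:ℝ)) = _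
    rw [h2]
    simp only [pu, pv]
    ring
  intro p hp
  have hrp : 0 < r p := hsol.r_pos p hp
  have hpU : U ∈ nhds p := hU.mem_nhds hp
  -- replace the inner partial derivatives by their formulas, eventually near p
  have heqA : (fun q => r q ^ 2 * f (r q) * pv φ q ^ 2
        - 2 * r q * deriv f (r q) * pv r q * φ q ^ 2
        + pv (fun q' => r q' * f (r q') * φ q' ^ 2) q)
      =ᶠ[nhds p] (fun q => r q ^ 2 * f (r q) * pv φ q ^ 2
        - 2 * r q * deriv f (r q) * pv r q * φ q ^ 2
        + (pv r q * f (r q) * φ q ^ 2 + r q * deriv f (r q) * pv r q * φ q ^ 2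
            + 2 * r q * f (r q) * φ q * pv φ q)) := by
    filter_upwards [hpU] with q hq
    rw [hGv q hq]
  have heqB : (fun q => r q ^ 2 * f (r q) * pu φ q ^ 2
        + 2 * r q * deriv f (r q) * pu r q * φ q ^ 2
        - pu (fun q' => r q' * f (r q') * φ q' ^ 2) q)
      =ᶠ[nhds p] (fun q => r q ^ 2 * f (r q) * pu φ q ^ 2
        + 2 * r q * deriv f (r q) * pu r q * φ q ^ 2
        - (pu r q * f (r q) * φ q ^ 2 + r q * deriv f (r q) * pu r q * φ q ^ 2
            + 2 * r q * f (r q) * φ q * pu φ q)) := by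
    filter_upwards [hpU] with q hq
    rw [hGu q hq]
  have eA : pu (fun q => r q ^ 2 * f (r q) * pv φ q ^ 2
        - 2 * r q * deriv f (r q) * pv r q * φ q ^ 2
        + pv (fun q' => r q' * f (r q') * φ q' ^ 2) q) p
      = fderiv ℝ (fun q => r q ^ 2 * f (r q) * pv φ q ^ 2
        - 2 * r q * deriv f (r q) * pv r q * φ q ^ 2
        + (pv r q * f (r q) * φ q ^ 2 + r q * deriv f (r q) * pv r q * φ q ^ 2
            + 2 * r q * f (r q) * φ q * pv φ q)) p ((1:ℝ), (0:ℝ)) := by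
    simp only [pu]
    rw [heqA.fderiv_eq]
  have eB : pv (fun q => r q ^ 2 * f (r q) * pu φ q ^ 2
        + 2 * r q * deriv f (r q) * pu r q * φ q ^ 2
        - pu (fun q' => r q' * f (r q') * φ q' ^ 2) q) p
      = fderiv ℝ (fun q => r q ^ 2 * f (r q) * pu φ q ^ 2
        + 2 * r q * deriv f (r q) * pu r q * φ q ^ 2
        - (pu r q * f (r q) * φ q ^ 2 + r q * deriv f (r q) * pu r q * φ q ^ 2
            + 2 * r q * f (r q) * φ q * pu φ q)) p ((0:ℝ), (1:ℝ)) := by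
    simp only [pv]
    rw [heqB.fderiv_eq]
  -- compute the u-derivative of the A-bracket
  have hRu := hasDerivAt_line r ((1:ℝ), (0:ℝ)) (hdr p hp)
  have hFu := hasDerivAt_line (fun q => f (r q)) ((1:ℝ), (0:ℝ)) (hdF p hp)
  have hF1u := hasDerivAt_line (fun q => deriv f (r q)) ((1:ℝ), (0:ℝ)) (hdF1 p hp)
  have hPhiu := hasDerivAt_line φ ((1:ℝ), (0:ℝ)) (hdφ p hp)
  have hLu := hasDerivAt_line (pv r) ((1:ℝ), (0:ℝ)) (hdL p hp)
  have hPvu := hasDerivAt_line (pv φ) ((1:ℝ), (0:ℝ)) (hdPv p hp)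
  have hdA : DifferentiableAt ℝ (fun q => r q ^ 2 * f (r q) * pv φ q ^ 2
        - 2 * r q * deriv f (r q) * pv r q * φ q ^ 2
        + (pv r q * f (r q) * φ q ^ 2 + r q * deriv f (r q) * pv r q * φ q ^ 2
            + 2 * r q * f (r q) * φ q * pv φ q)) p := by
    have h1 := (((hdr p hp).pow 2).mul (hdF p hp)).mul ((hdPv p hp).pow 2)
    have h2 := (((((hdr p hp).const_mul (2:ℝ)).mul (hdF1 p hp)).mul (hdL p hp)).mul
      ((hdφ p hp).pow 2))
    have h3 := ((hdL p hp).mul (hdF p hp)).mul ((hdφ p hp).pow 2)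
    have h4 := (((hdr p hp).mul (hdF1 p hp)).mul (hdL p hp)).mul ((hdφ p hp).pow 2)
    have h5 := ((((hdr p hp).const_mul (2:ℝ)).mul (hdF p hp)).mul (hdφ p hp)).mul (hdPv p hp)
    exact (h1.sub h2).add ((h3.add h4).add h5)
  have hA1 := ((hRu.pow 2).mul hFu).mul (hPvu.pow 2)
  have hA2 := (((HasDerivAt.const_mul (2:ℝ) hRu).mul hF1u).mul hLu).mul (hPhiu.pow 2)
  have hA3 := (hLu.mul hFu).mul (hPhiu.pow 2)
  have hA4 := ((hRu.mul hF1u).mul hLu).mul (hPhiu.pow 2)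
  have hA5 := (((HasDerivAt.const_mul (2:ℝ) hRu).mul hFu).mul hPhiu).mul hPvu
  have hA := pd_eq (w := ((1:ℝ), (0:ℝ))) hdA
    (by exact (hA1.sub hA2).add ((hA3.add hA4).add hA5))
  simp only [zero_smul, add_zero, Pi.mul_apply, Pi.pow_apply] at hA
  rw [pd_comp (hfd _ hrp) (hdr p hp), pd_comp (hf'd _ hrp) (hdr p hp)] at hA
  -- compute the v-derivative of the B-bracket
  have hRv := hasDerivAt_line r ((0:ℝ), (1:ℝ)) (hdr p hp)
  have hFv := hasDerivAt_line (fun q => f (r q)) ((0:ℝ), (1:ℝ)) (hdF p hp)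
  have hF1v := hasDerivAt_line (fun q => deriv f (r q)) ((0:ℝ), (1:ℝ)) (hdF1 p hp)
  have hPhiv := hasDerivAt_line φ ((0:ℝ), (1:ℝ)) (hdφ p hp)
  have hNv := hasDerivAt_line (pu r) ((0:ℝ), (1:ℝ)) (hdN p hp)
  have hPuv := hasDerivAt_line (pu φ) ((0:ℝ), (1:ℝ)) (hdPu p hp)
  have hdB : DifferentiableAt ℝ (fun q => r q ^ 2 * f (r q) * pu φ q ^ 2
        + 2 * r q * deriv f (r q) * pu r q * φ q ^ 2
        - (pu r q * f (r q) * φ q ^ 2 + r q * deriv f (r q) * pu r q * φ q ^ 2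
            + 2 * r q * f (r q) * φ q * pu φ q)) p := by
    have h1 := (((hdr p hp).pow 2).mul (hdF p hp)).mul ((hdPu p hp).pow 2)
    have h2 := (((((hdr p hp).const_mul (2:ℝ)).mul (hdF1 p hp)).mul (hdN p hp)).mul
      ((hdφ p hp).pow 2))
    have h3 := ((hdN p hp).mul (hdF p hp)).mul ((hdφ p hp).pow 2)
    have h4 := (((hdr p hp).mul (hdF1 p hp)).mul (hdN p hp)).mul ((hdφ p hp).pow 2)
    have h5 := ((((hdr p hp).const_mul (2:ℝ)).mul (hdF p hp)).mul (hdφ p hp)).mul (hdPu p hp)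
    exact (h1.add h2).sub ((h3.add h4).add h5)
  have hB1 := ((hRv.pow 2).mul hFv).mul (hPuv.pow 2)
  have hB2 := (((HasDerivAt.const_mul (2:ℝ) hRv).mul hF1v).mul hNv).mul (hPhiv.pow 2)
  have hB3 := (hNv.mul hFv).mul (hPhiv.pow 2)
  have hB4 := ((hRv.mul hF1v).mul hNv).mul (hPhiv.pow 2)
  have hB5 := (((HasDerivAt.const_mul (2:ℝ) hRv).mul hFv).mul hPhiv).mul hPuv
  have hB := pd_eq (w := ((0:ℝ), (1:ℝ))) hdB
    (by exact (hB1.add hB2).sub ((hB3.add hB4).add hB5))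
  simp only [zero_smul, add_zero, Pi.mul_apply, Pi.pow_apply] at hB
  rw [pd_comp (hfd _ hrp) (hdr p hp), pd_comp (hf'd _ hrp) (hdr p hp)] at hB
  -- the field equations and symmetry of second derivatives
  have hwr := hsol.wave_r p hp
  have hwφ := hsol.wave_φ p hp
  have hsr : pv (pu r) p = pu (pv r) p := pd_symm (hrC p hp)
  have hsφ : pv (pu φ) p = pu (pv φ) p := pd_symm (hφC p hp)
  have hνp := hν p hp
  have hΩp := (hsol.Ω2_pos p hp).ne'
  have hrne := hrp.ne'
  rw [eA, eB, hA, hB]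
  simp only [pu, pv] at hwr hwφ hsr hsφ hνp ⊢
  simp only [kap, redshift, varpi, hawkingMass, pu, pv]
  rw [hsr, hsφ, hwr, hwφ]
  field_simp
  ring
end
end

section
/- Let (r, Ω², φ, e) be a smooth solution of the spherically symmetric Einstein–Maxwell–scalar field system on an open set U ⊆ ℝ². At every point p ∈ U where ∂_u r(p) < 0 and ∂_v r(p) ≥ 0, the renormalized Hawking mass satisfies the monotonicity ∂_u ϖ(p) ≤ 0 and ∂_v ϖ(p) ≥ 0. -/
noncomputable section

section DD

variable {f g : ℝ × ℝ → ℝ} {p w : ℝ × ℝ} {c : ℝ}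

lemma dd_add (hf : DifferentiableAt ℝ f p) (hg : DifferentiableAt ℝ g p) :
    fderiv ℝ (fun q => f q + g q) p w = fderiv ℝ f p w + fderiv ℝ g p w := by
  rw [fderiv_fun_add hf hg]; simp

lemma dd_mul (hf : DifferentiableAt ℝ f p) (hg : DifferentiableAt ℝ g p) :
    fderiv ℝ (fun q => f q * g q) p w = fderiv ℝ f p w * g p + f p * fderiv ℝ g p w := by
  rw [fderiv_fun_mul hf hg]; simp; ring

lemma dd_const_mul (hf : DifferentiableAt ℝ f p) (c : ℝ) :
    fderiv ℝ (fun q => c * f q) p w = c * fderiv ℝ f p w := by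
  rw [fderiv_const_mul hf c]; simp

lemma dd_inv (hg : DifferentiableAt ℝ g p) (h0 : g p ≠ 0) :
    fderiv ℝ (fun q => (g q)⁻¹) p w = -(fderiv ℝ g p w) / g p ^ 2 := by
  have h := (hasDerivAt_inv h0).comp_hasFDerivAt p hg.hasFDerivAt
  have h' : HasFDerivAt (fun q => (g q)⁻¹) (-(g p ^ 2)⁻¹ • fderiv ℝ g p) p := h
  rw [h'.fderiv]
  simp
  ring

lemma dd_div (hf : DifferentiableAt ℝ f p) (hg : DifferentiableAt ℝ g p) (h0 : g p ≠ 0) :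
    fderiv ℝ (fun q => f q / g q) p w
      = (fderiv ℝ f p w * g p - f p * fderiv ℝ g p w) / g p ^ 2 := by
  have he : (fun q => f q / g q) = fun q => f q * (g q)⁻¹ := by
    funext q; rw [div_eq_mul_inv]
  rw [he, dd_mul (g := fun q => (g q)⁻¹) hf (hg.inv h0), dd_inv hg h0]
  field_simp
  ring

lemma dd_const (c : ℝ) : fderiv ℝ (fun _ : ℝ × ℝ => c) p w = 0 := by
  simp

end DD

section Smooth

variable {U : Set (ℝ × ℝ)} {f : ℝ × ℝ → ℝ} {p w : ℝ × ℝ}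

lemma dd_contDiffOn (hU : IsOpen U) (hf : ContDiffOn ℝ (⊤ : ℕ∞) f U) (w : ℝ × ℝ) :
    ContDiffOn ℝ (⊤ : ℕ∞) (fun q => fderiv ℝ f q w) U :=
  (hf.fderiv_of_isOpen hU (by simp)).clm_apply contDiffOn_const

lemma dd_diffAt (hU : IsOpen U) (hf : ContDiffOn ℝ (⊤ : ℕ∞) f U) (hp : p ∈ U) (w : ℝ × ℝ) :
    DifferentiableAt ℝ (fun q => fderiv ℝ f q w) p :=
  ((dd_contDiffOn hU hf w).contDiffAt (hU.mem_nhds hp)).differentiableAt (by simp)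

lemma diffAt_of_contDiffOn (hU : IsOpen U) (hf : ContDiffOn ℝ (⊤ : ℕ∞) f U) (hp : p ∈ U) :
    DifferentiableAt ℝ f p :=
  (hf.contDiffAt (hU.mem_nhds hp)).differentiableAt (by simp)

lemma dd_symm (hU : IsOpen U) (hf : ContDiffOn ℝ (⊤ : ℕ∞) f U) (hp : p ∈ U) (v w : ℝ × ℝ) :
    fderiv ℝ (fun q => fderiv ℝ f q v) p w = fderiv ℝ (fun q => fderiv ℝ f q w) p v := by
  have hev : ∀ᶠ y in nhds p, HasFDerivAt f (fderiv ℝ f y) y := by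
    filter_upwards [hU.mem_nhds hp] with y hy
    exact (diffAt_of_contDiffOn hU hf hy).hasFDerivAt
  have hf' : DifferentiableAt ℝ (fderiv ℝ f) p :=
    ((hf.fderiv_of_isOpen hU (m := 1) (WithTop.coe_le_coe.mpr le_top)).contDiffAt (hU.mem_nhds hp)).differentiableAt one_ne_zero
  have hsym := second_derivative_symmetric_of_eventually hev hf'.hasFDerivAt v w
  have h1 : ∀ u : ℝ × ℝ, fderiv ℝ (fun q => fderiv ℝ f q u) p
      = (fderiv ℝ (fderiv ℝ f) p).flip u := by
    intro u
    have := fderiv_clm_apply hf' (differentiableAt_const u)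
    simpa using this
  rw [h1 v, h1 w]
  simpa using hsym.symm

end Smooth

lemma dd_main {r A B : ℝ × ℝ → ℝ} {e : ℝ} {p w : ℝ × ℝ}
    (hr : DifferentiableAt ℝ r p) (hA : DifferentiableAt ℝ A p) (hB : DifferentiableAt ℝ B p)
    (hr0 : r p ≠ 0) :
    fderiv ℝ (fun q => (2:ℝ)⁻¹ * r q + 2 * (r q * (A q * B q)) + e ^ 2 / (2 * r q)) p w
      = (2:ℝ)⁻¹ * fderiv ℝ r p w
        + 2 * (fderiv ℝ r p w * (A p * B p)
            + r p * (fderiv ℝ A p w * B p + A p * fderiv ℝ B p w))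
        - e ^ 2 * (2 * fderiv ℝ r p w) / (2 * r p) ^ 2 := by
  have h2r : DifferentiableAt ℝ (fun q => 2 * r q) p := hr.const_mul 2
  have h2r0 : (2:ℝ) * r p ≠ 0 := mul_ne_zero two_ne_zero hr0
  have d1 : DifferentiableAt ℝ (fun q => (2:ℝ)⁻¹ * r q) p := hr.const_mul _
  have d2 : DifferentiableAt ℝ (fun q => 2 * (r q * (A q * B q))) p :=
    (hr.mul (hA.mul hB)).const_mul 2
  have d3 : DifferentiableAt ℝ (fun q => e ^ 2 / (2 * r q)) p :=
    ((differentiableAt_const _).mul (h2r.inv h2r0)).congr_of_eventuallyEq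
      (Filter.Eventually.of_forall fun q => (div_eq_mul_inv _ _))
  have hAB : DifferentiableAt ℝ (fun q => A q * B q) p := hA.mul hB
  have hrAB : DifferentiableAt ℝ (fun q => r q * (A q * B q)) p := hr.mul hAB
  rw [dd_add (f := fun q => (2:ℝ)⁻¹ * r q + 2 * (r q * (A q * B q))) (d1.add d2) d3, dd_add d1 d2, dd_const_mul hr, dd_const_mul hrAB,
    dd_mul hr hAB, dd_mul hA hB,
    dd_div (differentiableAt_const (e ^ 2)) h2r h2r0, dd_const_mul hr, dd_const]
  ring

/-- (Monotonicity of the renormalized Hawking mass.) For a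
smooth solution of the spherically symmetric Einstein–Maxwell–scalar field
system on an open set `U ⊆ ℝ²`, at every point `p ∈ U` where `∂_u r(p) < 0`
and `∂_v r(p) ≥ 0` one has `∂_u ϖ(p) ≤ 0` and `∂_v ϖ(p) ≥ 0`. -/
theorem varpi_monotonicity
    (U : Set (ℝ × ℝ)) (r Ω2 φ : ℝ × ℝ → ℝ) (e : ℝ)
    (hsol : IsEMSSolution U r Ω2 φ e) :
    ∀ p ∈ U, pu r p < 0 → 0 ≤ pv r p →
      pu (varpi r Ω2 e) p ≤ 0 ∧ 0 ≤ pv (varpi r Ω2 e) p := by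
  intro p hp hnu hlam
  obtain ⟨hU, hr, hO, hφ, hrpos, hOpos, hwave_r, _, hray_u, hray_v, _⟩ := hsol
  have hr0 : r p ≠ 0 := (hrpos p hp).ne'
  have hO0 : Ω2 p ≠ 0 := (hOpos p hp).ne'
  have hrd : DifferentiableAt ℝ r p := diffAt_of_contDiffOn hU hr hp
  have hOd : DifferentiableAt ℝ Ω2 p := diffAt_of_contDiffOn hU hO hp
  have hnu_d : DifferentiableAt ℝ (pu r) p := dd_diffAt hU hr hp (1, 0)
  have hlam_d : DifferentiableAt ℝ (pv r) p := dd_diffAt hU hr hp (0, 1)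
  have hA_d : DifferentiableAt ℝ (fun q => pu r q / Ω2 q) p :=
    (hnu_d.mul (hOd.inv hO0)).congr_of_eventuallyEq
      (Filter.Eventually.of_forall fun q => (div_eq_mul_inv _ _))
  have hB_d : DifferentiableAt ℝ (fun q => pv r q / Ω2 q) p :=
    (hlam_d.mul (hOd.inv hO0)).congr_of_eventuallyEq
      (Filter.Eventually.of_forall fun q => (div_eq_mul_inv _ _))
  have hraU : fderiv ℝ (fun q => pu r q / Ω2 q) p (1, 0)
      = -(r p / Ω2 p) * pu φ p ^ 2 := hray_u p hp
  have hraV : fderiv ℝ (fun q => pv r q / Ω2 q) p (0, 1)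
      = -(r p / Ω2 p) * pv φ p ^ 2 := hray_v p hp
  have hwv : fderiv ℝ (pv r) p (1, 0)
      = -Ω2 p / (4 * r p) - pu r p * pv r p / r p + Ω2 p * e ^ 2 / (4 * r p ^ 3) :=
    hwave_r p hp
  have hsymm : fderiv ℝ (pu r) p (0, 1) = pu (pv r) p := dd_symm hU hr hp (1, 0) (0, 1)
  have hgroup_u : varpi r Ω2 e
      = fun q => (2:ℝ)⁻¹ * r q + 2 * (r q * ((pu r q / Ω2 q) * pv r q)) + e ^ 2 / (2 * r q) := by
    funext q; simp only [varpi, hawkingMass]; ring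
  have hgroup_v : varpi r Ω2 e
      = fun q => (2:ℝ)⁻¹ * r q + 2 * (r q * (pu r q * (pv r q / Ω2 q))) + e ^ 2 / (2 * r q) := by
    funext q; simp only [varpi, hawkingMass]; ring
  have hm1 : fderiv ℝ
      (fun q => (2:ℝ)⁻¹ * r q + 2 * (r q * ((pu r q / Ω2 q) * pv r q)) + e ^ 2 / (2 * r q))
      p (1, 0)
      = (2:ℝ)⁻¹ * pu r p
        + 2 * (pu r p * ((pu r p / Ω2 p) * pv r p)
            + r p * (fderiv ℝ (fun q => pu r q / Ω2 q) p (1, 0) * pv r p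
              + (pu r p / Ω2 p) * fderiv ℝ (pv r) p (1, 0)))
        - e ^ 2 * (2 * pu r p) / (2 * r p) ^ 2 := dd_main hrd hA_d hlam_d hr0
  have hm2 : fderiv ℝ
      (fun q => (2:ℝ)⁻¹ * r q + 2 * (r q * (pu r q * (pv r q / Ω2 q))) + e ^ 2 / (2 * r q))
      p (0, 1)
      = (2:ℝ)⁻¹ * pv r p
        + 2 * (pv r p * (pu r p * (pv r p / Ω2 p))
            + r p * (fderiv ℝ (pu r) p (0, 1) * (pv r p / Ω2 p)
              + pu r p * fderiv ℝ (fun q => pv r q / Ω2 q) p (0, 1)))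
        - e ^ 2 * (2 * pv r p) / (2 * r p) ^ 2 := dd_main hrd hnu_d hB_d hr0
  have key_u : pu (varpi r Ω2 e) p = -(2 * r p ^ 2 * pv r p / Ω2 p * pu φ p ^ 2) := by
    rw [hgroup_u]
    refine hm1.trans ?_
    rw [hraU, hwv]
    field_simp
    ring
  have key_v : pv (varpi r Ω2 e) p = 2 * r p ^ 2 * (-pu r p) / Ω2 p * pv φ p ^ 2 := by
    rw [hgroup_v]
    refine hm2.trans ?_
    rw [hsymm, hwave_r p hp, hraV]
    field_simp
    ring
  constructor
  · rw [key_u]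
    have h0 : 0 ≤ 2 * r p ^ 2 * pv r p / Ω2 p * pu φ p ^ 2 :=
      mul_nonneg (div_nonneg (mul_nonneg (by positivity) hlam) (hOpos p hp).le) (sq_nonneg _)
    linarith
  · rw [key_v]
    exact mul_nonneg (div_nonneg (mul_nonneg (by positivity) (by linarith)) (hOpos p hp).le)
      (sq_nonneg _)
end
end
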